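/- Let S be a finite type, T ⊆ S a set of terminal states, and P : S → S → ℝ a row-stochastic matrix, i.e., P s s' ≥ 0 for all s, s' and Σ_{s'} P s s' = 1 for all s. Then the following are equivalent: (i) there exists a weight function w : S → ℝ such that for every s ∉ T one has w s + 1 ≤ Σ_{s'} P s s' · w s'; (ii) from every state s ∈ S some terminal state is reachable through positive-probability transitions, i.e., for every s there exists u ∈ T with (s, u) in the reflexive-transitive closure of the relation {(x, y) | P x y > 0}. -/
import Mathlib

/-- `RnAux T P n s`: from `s` one can reach `T` in at most `n` positive steps. -/
def RnAux {S : Type*} (T : Set S) (P : S → S → ℝ) : ℕ → S → Prop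
  | 0, s => s ∈ T
  | n+1, s => s ∈ T ∨ ∃ s', 0 < P s s' ∧ RnAux T P n s'

/-- Auxiliary sequence: `DAux ε 0 = 0`, `DAux ε (n+1) = (1 + DAux ε n)/ε`. -/
noncomputable def DAux (ε : ℝ) : ℕ → ℝ
  | 0 => 0
  | n+1 => (1 + DAux ε n) / ε

lemma DAux_nonneg {ε : ℝ} (hε : 0 < ε) : ∀ n, 0 ≤ DAux ε n
  | 0 => le_refl 0
  | n+1 => by
      have := DAux_nonneg hε n
      have : (0:ℝ) ≤ 1 + DAux ε n := by linarith
      exact div_nonneg this hε.le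

lemma DAux_mono {ε : ℝ} (hε : 0 < ε) (hε1 : ε ≤ 1) : Monotone (DAux ε) := by
  apply monotone_nat_of_le_succ
  intro n
  have h0 := DAux_nonneg hε n
  have h1 : (0:ℝ) ≤ 1 + DAux ε n := by linarith
  have : DAux ε n ≤ (1 + DAux ε n) / ε := by
    rw [le_div_iff₀ hε]
    nlinarith
  simpa [DAux] using this

/-- For a finite row-stochastic matrix `P` and a set `T` of terminal states,
a weight-decreasing function exists iff every state reaches some terminal state
through positive-probability transitions. -/
theorem weight_decreasing_iff_reach_terminal
    {S : Type*} [Fintype S] (T : Set S) (P : S → S → ℝ)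
    (hnn : ∀ s s', 0 ≤ P s s') (hrow : ∀ s, (∑ s', P s s') = 1) :
    (∃ w : S → ℝ, ∀ s ∉ T, w s + 1 ≤ ∑ s', P s s' * w s') ↔
    (∀ s : S, ∃ u ∈ T, Relation.ReflTransGen (fun x y => 0 < P x y) s u) := by
  classical
  constructor
  · rintro ⟨w, hw⟩ s
    by_contra hs
    set A : Finset S :=
      Finset.univ.filter
        (fun x => ¬ ∃ u ∈ T, Relation.ReflTransGen (fun x y => 0 < P x y) x u) with hA
    have hsA : s ∈ A := by
      simp only [hA, Finset.mem_filter, Finset.mem_univ, true_and]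
      exact hs
    obtain ⟨m, hmA, hmax⟩ := A.exists_max_image w ⟨s, hsA⟩
    have hmA' : ¬ ∃ u ∈ T, Relation.ReflTransGen (fun x y => 0 < P x y) m u := by
      simpa [hA] using hmA
    have hmT : m ∉ T := fun h => hmA' ⟨m, h, Relation.ReflTransGen.refl⟩
    have key := hw m hmT
    have hle : ∀ s', P m s' * w s' ≤ P m s' * w m := by
      intro s'
      rcases lt_or_eq_of_le (hnn m s') with hp | hp
      · have hs'A : s' ∈ A := by
          simp only [hA, Finset.mem_filter, Finset.mem_univ, true_and]
          rintro ⟨u, hu, hr⟩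
          exact hmA' ⟨u, hu, Relation.ReflTransGen.head hp hr⟩
        exact mul_le_mul_of_nonneg_left (hmax s' hs'A) hp.le
      · simp [← hp]
    have hsum : ∑ s', P m s' * w s' ≤ w m := by
      calc ∑ s', P m s' * w s' ≤ ∑ s', P m s' * w m :=
            Finset.sum_le_sum (fun s' _ => hle s')
        _ = w m := by rw [← Finset.sum_mul, hrow, one_mul]
    linarith
  · intro hreach
    rcases isEmpty_or_nonempty S with hS | hS
    · exact ⟨fun _ => 0, fun s _ => (IsEmpty.false s).elim⟩
    -- positive transitions exist
    set posF : Finset (S × S) := Finset.univ.filter (fun p => 0 < P p.1 p.2) with hposF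
    have hposne : posF.Nonempty := by
      obtain ⟨s⟩ := hS
      have : ∃ s', 0 < P s s' := by
        by_contra h
        push_neg at h
        have : ∑ s', P s s' = 0 :=
          Finset.sum_eq_zero (fun s' _ => le_antisymm (h s') (hnn s s'))
        rw [hrow] at this; norm_num at this
      obtain ⟨s', hs'⟩ := this
      exact ⟨(s, s'), by simp [hposF, hs']⟩
    set ε : ℝ := posF.inf' hposne (fun p => P p.1 p.2) with hε
    have hεpos : 0 < ε := by
      rw [hε, Finset.lt_inf'_iff]
      intro p hp
      simpa [hposF] using hp
    have hεle : ∀ x y, 0 < P x y → ε ≤ P x y := by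
      intro x y h
      exact Finset.inf'_le _ (by simp [hposF, h] : ((x, y) : S × S) ∈ posF)
    have hε1 : ε ≤ 1 := by
      obtain ⟨⟨x, y⟩, hp⟩ := hposne
      have hxy : 0 < P x y := by simpa [hposF] using hp
      have h1 : P x y ≤ ∑ s', P x s' :=
        Finset.single_le_sum (fun s' _ => hnn x s') (Finset.mem_univ y)
      rw [hrow] at h1
      exact le_trans (hεle x y hxy) h1
    -- bounded-step reachability
    have hex : ∀ s, ∃ n, RnAux T P n s := by
      intro s
      obtain ⟨u, hu, hr⟩ := hreach s
      induction hr using Relation.ReflTransGen.head_induction_on with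
      | refl => exact ⟨0, hu⟩
      | head hp _ ih =>
          obtain ⟨n, hn⟩ := ih
          exact ⟨n + 1, Or.inr ⟨_, hp, hn⟩⟩
    have hdec : ∀ n s, Decidable (RnAux T P n s) := fun _ _ => Classical.dec _
    let d : S → ℕ := fun s => Nat.find (hex s)
    have hdspec : ∀ s, RnAux T P (d s) s := fun s => Nat.find_spec (hex s)
    have hdle : ∀ s n, RnAux T P n s → d s ≤ n := fun s n h => Nat.find_le h
    set N : ℕ := Finset.univ.sup d with hN
    have hdN : ∀ s, d s ≤ N := fun s => Finset.le_sup (Finset.mem_univ s)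
    refine ⟨fun s => DAux ε (N - d s), ?_⟩
    intro s hsT
    -- d s ≥ 1 and there is a step decreasing d
    have hds : d s ≠ 0 := by
      intro h
      have := hdspec s
      rw [h] at this
      exact hsT this
    obtain ⟨k, hk⟩ : ∃ k, d s = k + 1 := ⟨d s - 1, (Nat.succ_pred_eq_of_pos (Nat.pos_of_ne_zero hds)).symm⟩
    have hspec := hdspec s
    rw [hk] at hspec
    rcases hspec with h | ⟨s0, hps0, hRn⟩
    · exact absurd h hsT
    have hd0 : d s0 ≤ k := hdle s0 k hRn
    -- the single term for s0 gives the bound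
    have hterm : ε * DAux ε (N - k) ≤ P s s0 * DAux ε (N - d s0) := by
      apply mul_le_mul (hεle s s0 hps0)
        (DAux_mono hεpos hε1 (Nat.sub_le_sub_left hd0 N))
        (DAux_nonneg hεpos _) (hnn s s0)
    have hsingle : P s s0 * DAux ε (N - d s0) ≤ ∑ s', P s s' * DAux ε (N - d s') :=
      Finset.single_le_sum (f := fun s' => P s s' * DAux ε (N - d s'))
        (fun s' _ => mul_nonneg (hnn s s') (DAux_nonneg hεpos _)) (Finset.mem_univ s0)
    have hNk : N - d s + 1 = N - k := by
      have := hdN s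
      omega
    have hkey : DAux ε (N - d s) + 1 ≤ ε * DAux ε (N - k) := by
      rw [← hNk]
      have : DAux ε (N - d s + 1) = (1 + DAux ε (N - d s)) / ε := rfl
      rw [this, mul_div_cancel₀ _ (ne_of_gt hεpos)]
      linarith
    linarith
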